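/- Let 1 < p < N, let Ω be a bounded domain of ℝ^N with diameter D, let β > 1 and κ > 0. For every ε > 0 there exists a constant c_ε = c_ε(ε, N, p, β, κ, D) > 0 such that for every nonnegative bounded Borel measure ω on Ω and every integer n ≥ 1, one has ( n + κ·W_{1,p}^{2D}[ n·1_Ω dx + ω ](x) )^β ≤ c_ε · n^{βp/(p−1)} + (1 + ε) κ^β ( W_{1,p}^{2D}[ω](x) )^β for a.e. x ∈ Ω, where n·1_Ω dx denotes n times Lebesgue measure restricted to Ω. -/

import Mathlib

open MeasureTheory Metric Set
open scoped ENNReal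

/-- Truncated Wolff potential `W_{1,p}^R[ω](x) = ∫_0^R (r^{p-N} ω(B(x,r)))^{1/(p-1)} dr/r`. -/
noncomputable def wolffPotential (N : ℕ) (p R : ℝ)
    (ω : Measure (EuclideanSpace ℝ (Fin N))) (x : EuclideanSpace ℝ (Fin N)) : ℝ≥0∞ :=
  ∫⁻ r in Ioo (0:ℝ) R,
    (ENNReal.ofReal (r ^ (p - (N:ℝ))) * ω (ball x r)) ^ (1/(p-1)) / ENNReal.ofReal r

/-- Maximal fractional operator
`M_{p,R}^η[ω](x) = sup_{0<r<R} ω(B(x,r)) / (r^{N-p} h_η(r))`,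
where `h_η(r) = min((−ln r)^{−η}, (ln 2)^{−η})`. -/
noncomputable def maxFracOp (N : ℕ) (p R η : ℝ)
    (ω : Measure (EuclideanSpace ℝ (Fin N))) (x : EuclideanSpace ℝ (Fin N)) : ℝ≥0∞ :=
  ⨆ r ∈ Ioo (0:ℝ) R,
    ω (ball x r) /
      ENNReal.ofReal (r ^ ((N:ℝ) - p) * min ((-Real.log r) ^ (-η)) ((Real.log 2) ^ (-η)))

/-!
With `q = 1/(p-1)`, the elementary inequality `(a + b)^q ≤ (1 + t⁻¹)^q a^q + (1 + t)^q b^q`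
applied under the integral splits `W[n·1_Ω dx + ω]` into `(1 + t⁻¹)^q W[n·1_Ω dx]` and
`(1 + t)^q W[ω]`. Since `|B(x,r)| = c_N r^N`, the first part is at most `C n^q`, so
`n + κ W[n·1_Ω dx + ω] ≤ C' n^(q+1) + κ (1 + t)^q W[ω]` for `n ≥ 1`. Raising this to the power
`β` with the same inequality gives the claim with the constant `κ^β (1 + t)^(β(q+1))` in front
of `W[ω]^β`, and `t > 0` is chosen so small that `(1 + t)^(β(q+1)) < 1 + ε`.
-/

open Filter Topology

namespace ENNReal

theorem rpow_add_le_one_add_inv_rpow_mul_add {q : ℝ} (hq : 0 ≤ q) {t : ℝ≥0∞}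
    (ht₀ : t ≠ 0) (ht : t ≠ ⊤) (a b : ℝ≥0∞) :
    (a + b) ^ q ≤ (1 + t⁻¹) ^ q * a ^ q + (1 + t) ^ q * b ^ q := by
  rcases le_total a (t * b) with hab | hba
  · calc (a + b) ^ q ≤ ((1 + t) * b) ^ q := by gcongr; rw [add_mul, one_mul, add_comm]; gcongr
      _ = (1 + t) ^ q * b ^ q := mul_rpow_of_nonneg _ _ hq
      _ ≤ _ := le_add_self
  · have hb : b ≤ t⁻¹ * a := by
      rwa [← ENNReal.div_eq_inv_mul, ENNReal.le_div_iff_mul_le (.inl ht₀) (.inl ht), mul_comm]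
    calc (a + b) ^ q ≤ ((1 + t⁻¹) * a) ^ q := by gcongr; rw [add_mul, one_mul]; gcongr
      _ = (1 + t⁻¹) ^ q * a ^ q := mul_rpow_of_nonneg _ _ hq
      _ ≤ _ := le_self_add

theorem rpow_le_of_le_add_mul_one_add_rpow_mul {X a k W t : ℝ≥0∞} {q β : ℝ}
    (hβ : 0 ≤ β) (ht₀ : t ≠ 0) (ht : t ≠ ⊤) (hX : X ≤ a + k * (1 + t) ^ q * W) :
    X ^ β ≤ (1 + t⁻¹) ^ β * a ^ β + (1 + t) ^ (β * (q + 1)) * k ^ β * W ^ β := by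
  have hsplit : (1 + t) ^ (β * (q + 1)) = (1 + t) ^ β * (1 + t) ^ (q * β) := by
    rw [mul_add, mul_one, rpow_add _ _ (by simp) (by finiteness), mul_comm q, mul_comm]
  calc X ^ β ≤ (a + k * (1 + t) ^ q * W) ^ β := rpow_le_rpow hX hβ
    _ ≤ (1 + t⁻¹) ^ β * a ^ β + (1 + t) ^ β * (k * (1 + t) ^ q * W) ^ β :=
      rpow_add_le_one_add_inv_rpow_mul_add hβ ht₀ ht _ _
    _ = _ := by simp only [hsplit, mul_rpow_of_nonneg _ _ hβ, ← rpow_mul]; ring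

theorem exists_one_add_rpow_lt (s : ℝ) {c : ℝ≥0∞} (hc : 1 < c) :
    ∃ t : ℝ≥0∞, t ≠ 0 ∧ t ≠ ⊤ ∧ (1 + t) ^ s < c := by
  have hcont : Continuous fun t : ℝ≥0∞ => (1 + t) ^ s :=
    continuous_rpow_const.comp (continuous_const_add 1)
  have hlim : Tendsto (fun t : ℝ≥0∞ => (1 + t) ^ s) (𝓝[>] 0) (𝓝 1) := by
    simpa using (hcont.tendsto 0).mono_left nhdsWithin_le_nhds
  obtain ⟨t, ht, ht₀, ht₁⟩ :=
    ((hlim.eventually (gt_mem_nhds hc)).and (Ioo_mem_nhdsGT zero_lt_one)).exists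
  exact ⟨t, ht₀.ne', ht₁.ne_top, ht⟩

end ENNReal

section wolffPotential

variable {N : ℕ} {p : ℝ} (R : ℝ) (x : EuclideanSpace ℝ (Fin N))

theorem measurable_wolffPotential_integrand (q : ℝ) (μ : Measure (EuclideanSpace ℝ (Fin N))) :
    Measurable fun r : ℝ =>
      (ENNReal.ofReal (r ^ (p - (N:ℝ))) * μ (ball x r)) ^ q / ENNReal.ofReal r := by
  have hball : Measurable fun r : ℝ => μ (ball x r) :=
    Monotone.measurable fun _ _ hrs => measure_mono (ball_subset_ball hrs)
  exact ((ENNReal.measurable_ofReal.comp (by fun_prop)).mul hball).pow_const q |>.div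
    ENNReal.measurable_ofReal

theorem wolffPotential_add_le (hp : 1 ≤ p) {t : ℝ≥0∞} (ht₀ : t ≠ 0) (ht : t ≠ ⊤)
    (μ ν : Measure (EuclideanSpace ℝ (Fin N))) :
    wolffPotential N p R (μ + ν) x ≤
      (1 + t⁻¹) ^ (1 / (p - 1)) * wolffPotential N p R μ x
        + (1 + t) ^ (1 / (p - 1)) * wolffPotential N p R ν x := by
  have hq : 0 ≤ 1 / (p - 1) := one_div_nonneg.mpr (by linarith)
  unfold wolffPotential
  rw [← lintegral_const_mul _ (measurable_wolffPotential_integrand x _ μ),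
    ← lintegral_const_mul _ (measurable_wolffPotential_integrand x _ ν),
    ← lintegral_add_left ((measurable_wolffPotential_integrand x _ μ).const_mul _)]
  refine lintegral_mono fun r => ?_
  simp only [Measure.add_apply, mul_add, mul_div_assoc', ← ENNReal.add_div]
  gcongr
  exact ENNReal.rpow_add_le_one_add_inv_rpow_mul_add hq ht₀ ht _ _

theorem wolffPotential_le_of_measure_ball_le (hp : 1 < p)
    {μ : Measure (EuclideanSpace ℝ (Fin N))} {M : ℝ≥0∞}
    (hμ : ∀ r, 0 < r → μ (ball x r) ≤ M * ENNReal.ofReal (r ^ N)) :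
    wolffPotential N p R μ x ≤
      M ^ (1 / (p - 1)) * ENNReal.ofReal (R ^ (1 / (p - 1))) * ENNReal.ofReal R := by
  set q := 1 / (p - 1) with hq_def
  have hq : 0 ≤ q := one_div_nonneg.mpr (by linarith)
  have hpq : p * q = q + 1 := by rw [hq_def]; field_simp [(by linarith : p - 1 ≠ 0)]; ring
  unfold wolffPotential
  calc ∫⁻ r in Ioo 0 R, (ENNReal.ofReal (r ^ (p - (N:ℝ))) * μ (ball x r)) ^ q / ENNReal.ofReal r
      ≤ ∫⁻ _ in Ioo 0 R, M ^ q * ENNReal.ofReal (R ^ q) := by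
        refine setLIntegral_mono' measurableSet_Ioo fun r ⟨hr, hrR⟩ => ?_
        have hball : ENNReal.ofReal (r ^ (p - (N:ℝ))) * μ (ball x r) ≤
            M * ENNReal.ofReal (r ^ p) := by
          calc _ ≤ ENNReal.ofReal (r ^ (p - (N:ℝ))) * (M * ENNReal.ofReal (r ^ N)) := by
                gcongr; exact hμ r hr
            _ = M * ENNReal.ofReal (r ^ p) := by
                rw [mul_left_comm, ← ENNReal.ofReal_mul (by positivity), ← Real.rpow_natCast,
                  ← Real.rpow_add hr, sub_add_cancel]
        have hpow : r ^ (p * q) / r = r ^ q := by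
          rw [div_eq_iff hr.ne', ← Real.rpow_add_one hr.ne', hpq]
        calc _ ≤ (M * ENNReal.ofReal (r ^ p)) ^ q / ENNReal.ofReal r := by gcongr
          _ = M ^ q * ENNReal.ofReal (r ^ q) := by
              rw [ENNReal.mul_rpow_of_nonneg _ _ hq, ENNReal.ofReal_rpow_of_pos (by positivity),
                ← Real.rpow_mul hr.le, mul_div_assoc, ← ENNReal.ofReal_div_of_pos hr, hpow]
          _ ≤ M ^ q * ENNReal.ofReal (R ^ q) := by gcongr
    _ = M ^ q * ENNReal.ofReal (R ^ q) * ENNReal.ofReal R := by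
        rw [setLIntegral_const, Real.volume_Ioo, sub_zero]

theorem wolffPotential_smul_restrict_volume_le (hp : 1 < p) (c : ℝ≥0∞)
    (Ω : Set (EuclideanSpace ℝ (Fin N))) :
    wolffPotential N p R (c • volume.restrict Ω) x ≤
      c ^ (1 / (p - 1)) * (volume (ball (0 : EuclideanSpace ℝ (Fin N)) 1) ^ (1 / (p - 1))
        * ENNReal.ofReal (R ^ (1 / (p - 1))) * ENNReal.ofReal R) := by
  have hq : 0 ≤ 1 / (p - 1) := one_div_nonneg.mpr (by linarith)
  refine (wolffPotential_le_of_measure_ball_le R x hp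
    (M := c * volume (ball (0 : EuclideanSpace ℝ (Fin N)) 1)) fun r hr => ?_).trans_eq ?_
  · calc (c • volume.restrict Ω) (ball x r) ≤ c * volume (ball x r) := by
          rw [Measure.smul_apply, smul_eq_mul]; gcongr; exact Measure.restrict_le_self
      _ = _ := by
          rw [Measure.addHaar_ball_of_pos _ _ hr, finrank_euclideanSpace_fin]; ring
  · rw [ENNReal.mul_rpow_of_nonneg _ _ hq]; ring

theorem add_mul_wolffPotential_add_le (hp : 1 < p) {n : ℝ≥0∞} (hn : 1 ≤ n) (k : ℝ≥0∞)
    {t : ℝ≥0∞} (ht₀ : t ≠ 0) (ht : t ≠ ⊤) {μ : Measure (EuclideanSpace ℝ (Fin N))} {K : ℝ≥0∞}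
    (hμ : wolffPotential N p R μ x ≤ n ^ (1 / (p - 1)) * K)
    (ν : Measure (EuclideanSpace ℝ (Fin N))) :
    n + k * wolffPotential N p R (μ + ν) x ≤
      (1 + k * ((1 + t⁻¹) ^ (1 / (p - 1)) * K)) * n ^ (1 / (p - 1) + 1)
        + k * (1 + t) ^ (1 / (p - 1)) * wolffPotential N p R ν x := by
  set q := 1 / (p - 1)
  have hq : 0 ≤ q := one_div_nonneg.mpr (by linarith)
  have hn_le : n ≤ n ^ (q + 1) := by
    simpa using ENNReal.rpow_le_rpow_of_exponent_le hn (by linarith : (1:ℝ) ≤ q + 1)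
  have hnq_le : n ^ q ≤ n ^ (q + 1) := ENNReal.rpow_le_rpow_of_exponent_le hn (by linarith)
  calc _ ≤ n + k * ((1 + t⁻¹) ^ q * (n ^ q * K) + (1 + t) ^ q * wolffPotential N p R ν x) := by
        gcongr
        exact (wolffPotential_add_le R x hp.le ht₀ ht μ ν).trans (by gcongr)
    _ = n + k * ((1 + t⁻¹) ^ q * K) * n ^ q + k * (1 + t) ^ q * wolffPotential N p R ν x := by
        ring
    _ ≤ _ := by rw [add_mul, one_mul]; gcongr

end wolffPotential

theorem wolff_plus_lebesgue_pow_le_general (N : ℕ) (p β κ D : ℝ)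
    (hp : 1 < p) (hβ : 1 < β) (hκ : 0 < κ) :
    ∀ ε : ℝ, 0 < ε → ∃ c : ℝ, 0 < c ∧
      ∀ Ω : Set (EuclideanSpace ℝ (Fin N)),
        IsOpen Ω → IsConnected Ω → Bornology.IsBounded Ω → Metric.diam Ω = D →
        ∀ ω : Measure (EuclideanSpace ℝ (Fin N)), IsFiniteMeasure ω → ω Ωᶜ = 0 →
          ∀ n : ℕ, 1 ≤ n →
            ∀ᵐ x ∂(volume.restrict Ω),
              ((n : ℝ≥0∞) + ENNReal.ofReal κ *
                  wolffPotential N p (2 * D) ((n : ℝ≥0∞) • volume.restrict Ω + ω) x) ^ β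
                ≤ ENNReal.ofReal c * (n : ℝ≥0∞) ^ (β * p / (p - 1))
                  + ENNReal.ofReal ((1 + ε) * κ ^ β) *
                      wolffPotential N p (2 * D) ω x ^ β := by
  intro ε hε
  set q := 1 / (p - 1) with hq_def
  have hβ₀ : 0 ≤ β := by linarith
  obtain ⟨t, ht₀, ht, htε⟩ :=
    ENNReal.exists_one_add_rpow_lt (β * (q + 1)) (c := ENNReal.ofReal (1 + ε))
      (ENNReal.one_lt_ofReal.mpr (by linarith))
  set K := volume (ball (0 : EuclideanSpace ℝ (Fin N)) 1) ^ q
    * ENNReal.ofReal ((2 * D) ^ q) * ENNReal.ofReal (2 * D)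
  set B := 1 + ENNReal.ofReal κ * ((1 + t⁻¹) ^ q * K)
  set A := (1 + t⁻¹) ^ β * B ^ β
  have hA : A ≠ ⊤ := by finiteness
  refine ⟨A.toReal, ENNReal.toReal_pos (by simp [A, B, hβ₀]) hA,
    fun Ω _ _ _ _ ω _ _ n hn => ae_of_all _ fun x => ?_⟩
  have hlin := add_mul_wolffPotential_add_le (2 * D) x hp (Nat.one_le_cast.mpr hn)
    (ENNReal.ofReal κ) ht₀ ht (wolffPotential_smul_restrict_volume_le (2 * D) x hp _ Ω) ω
  have hexp : (q + 1) * β = β * p / (p - 1) := by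
    rw [hq_def]; field_simp [(by linarith : p - 1 ≠ 0)]; ring
  calc _ ≤ (1 + t⁻¹) ^ β * (B * (n : ℝ≥0∞) ^ (q + 1)) ^ β
        + (1 + t) ^ (β * (q + 1)) * ENNReal.ofReal κ ^ β * wolffPotential N p (2 * D) ω x ^ β :=
      ENNReal.rpow_le_of_le_add_mul_one_add_rpow_mul hβ₀ ht₀ ht hlin
    _ ≤ _ := by
      rw [ENNReal.mul_rpow_of_nonneg _ _ hβ₀, ← ENNReal.rpow_mul, hexp, ← mul_assoc,
        ENNReal.ofReal_toReal hA, ENNReal.ofReal_mul (by linarith),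
        ← ENNReal.ofReal_rpow_of_nonneg hκ.le hβ₀]
      gcongr

/-- for every `ε > 0` there is `c_ε = c_ε(ε,N,p,β,κ,D) > 0` such that, for
every bounded domain `Ω` of diameter `D`, every finite nonnegative measure `ω` supported in
`Ω` and every integer `n ≥ 1`,
`(n + κ W_{1,p}^{2D}[n·1_Ω dx + ω](x))^β ≤ c_ε n^{βp/(p−1)} + (1+ε) κ^β W_{1,p}^{2D}[ω](x)^β`
for a.e. `x ∈ Ω`. -/
theorem wolff_plus_lebesgue_pow_le (N : ℕ) (p β κ D : ℝ)
    (hp : 1 < p) (hpN : p < N) (hβ : 1 < β) (hκ : 0 < κ) :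
    ∀ ε : ℝ, 0 < ε → ∃ c : ℝ, 0 < c ∧
      ∀ Ω : Set (EuclideanSpace ℝ (Fin N)),
        IsOpen Ω → IsConnected Ω → Bornology.IsBounded Ω → Metric.diam Ω = D →
        ∀ ω : Measure (EuclideanSpace ℝ (Fin N)), IsFiniteMeasure ω → ω Ωᶜ = 0 →
          ∀ n : ℕ, 1 ≤ n →
            ∀ᵐ x ∂(volume.restrict Ω),
              ((n : ℝ≥0∞) + ENNReal.ofReal κ *
                  wolffPotential N p (2 * D) ((n : ℝ≥0∞) • volume.restrict Ω + ω) x) ^ β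
                ≤ ENNReal.ofReal c * (n : ℝ≥0∞) ^ (β * p / (p - 1))
                  + ENNReal.ofReal ((1 + ε) * κ ^ β) *
                      wolffPotential N p (2 * D) ω x ^ β :=
  wolff_plus_lebesgue_pow_le_general N p β κ D hp hβ hκ
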